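/- arXiv:2409.08675 — 4 statements merged into one kernel-verified Lean document; each statement's English description precedes it below -/
import Mathlib

section
/- Let 𝒢 be an undirected graph on n ≥ 2 vertices with m ≥ 1 edges, incidence matrix H ∈ ℝ^{m×n}, and let p = (p_1ᵀ,…,p_nᵀ)ᵀ ∈ ℝ^{dn} be a configuration with p_i ≠ p_j for every edge (i,j). Then the bearing Laplacian L_B(p) satisfies L_B(p) p = 0 and L_B(p)(1_n ⊗ w) = 0 for every w ∈ ℝ^d. Consequently, span{1_n ⊗ w : w ∈ ℝ^d} + span{p} ⊆ Null(L_B(p)), this subspace has dimension d + 1, and rank(L_B(p)) ≤ dn − d − 1. -/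
open Matrix MeasureTheory

noncomputable section

/-- `π_y = I - y yᵀ`: the orthogonal projection onto the hyperplane orthogonal to the
unit vector `y`. -/
def projMat {d : ℕ} (y : Fin d → ℝ) : Matrix (Fin d) (Fin d) ℝ :=
  1 - Matrix.vecMulVec y y

/-- A (symmetric positive-semidefinite valued) matrix function `Σ : [0,∞) → ℝ^{ι×ι}` is
*persistently exciting* (PE) if there are `T > 0`, `μ > 0` with
`(1/T) ∫_t^{t+T} Σ(τ) dτ ⪰ μ I` for all `t ≥ 0`; the Loewner bound is stated via
quadratic forms. -/
def MatrixPE {ι : Type*} [Fintype ι] (Sig : ℝ → Matrix ι ι ℝ) : Prop :=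
  ∃ T > (0 : ℝ), ∃ μ > (0 : ℝ), ∀ t ≥ (0 : ℝ), ∀ x : ι → ℝ,
    μ * (x ⬝ᵥ x) ≤ (1 / T) * ∫ τ in t..(t + T), x ⬝ᵥ (Sig τ).mulVec x

/-- A unit-vector valued function `y : [0,∞) → S^{d-1}` is PE if `t ↦ π_{y(t)}` is PE. -/
def BearingPE {d : ℕ} (y : ℝ → Fin d → ℝ) : Prop :=
  MatrixPE fun t => projMat (y t)

/-- Incidence matrix `H` of the oriented graph whose `k`-th edge goes from
`eInit k` to `eTerm k`. -/
def incMat {n m : ℕ} (eInit eTerm : Fin m → Fin n) : Matrix (Fin m) (Fin n) ℝ :=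
  Matrix.of fun k i => if i = eTerm k then 1 else if i = eInit k then -1 else 0

/-- `H̄ = H ⊗ I_d`. -/
def hbar (d : ℕ) {n m : ℕ} (eInit eTerm : Fin m → Fin n) :
    Matrix (Fin m × Fin d) (Fin n × Fin d) ℝ :=
  Matrix.of fun ka ib => incMat eInit eTerm ka.1 ib.1 * (if ka.2 = ib.2 then 1 else 0)

/-- `L = H̄ᵀ H̄`, the ordinary graph Laplacian tensored with `I_d`. -/
def lapMat (d : ℕ) {n m : ℕ} (eInit eTerm : Fin m → Fin n) :
    Matrix (Fin n × Fin d) (Fin n × Fin d) ℝ :=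
  (hbar d eInit eTerm)ᵀ * hbar d eInit eTerm

/-- Block diagonal matrix `blkdiag (f 1, …, f m)` with `d × d` blocks. -/
def blkdiag {m d : ℕ} (f : Fin m → Matrix (Fin d) (Fin d) ℝ) :
    Matrix (Fin m × Fin d) (Fin m × Fin d) ℝ :=
  Matrix.of fun ka lb => if ka.1 = lb.1 then f ka.1 ka.2 lb.2 else 0

/-- The `k`-th oriented edge vector `p̄_k = p_j - p_i`. -/
def edgeVec {d n m : ℕ} (eInit eTerm : Fin m → Fin n) (p : Fin n → Fin d → ℝ) (k : Fin m) :
    Fin d → ℝ :=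
  p (eTerm k) - p (eInit k)

/-- Euclidean norm on `ℝ^d` (as `Fin d → ℝ`). -/
def euclNorm {d : ℕ} (x : Fin d → ℝ) : ℝ := Real.sqrt (x ⬝ᵥ x)

/-- The bearing `ḡ_k = p̄_k / ‖p̄_k‖` of the `k`-th edge. -/
def bearingVec {d n m : ℕ} (eInit eTerm : Fin m → Fin n) (p : Fin n → Fin d → ℝ) (k : Fin m) :
    Fin d → ℝ :=
  (euclNorm (edgeVec eInit eTerm p k))⁻¹ • edgeVec eInit eTerm p k

/-- The bearing Laplacian `L_B(p) = H̄ᵀ blkdiag(π_{ḡ_1},…,π_{ḡ_m}) H̄`. -/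
def bearingLap {d n m : ℕ} (eInit eTerm : Fin m → Fin n) (p : Fin n → Fin d → ℝ) :
    Matrix (Fin n × Fin d) (Fin n × Fin d) ℝ :=
  (hbar d eInit eTerm)ᵀ * blkdiag (fun k => projMat (bearingVec eInit eTerm p k)) *
    hbar d eInit eTerm

/-- The simple undirected graph underlying the edge list. -/
def formationGraph {n m : ℕ} (eInit eTerm : Fin m → Fin n) : SimpleGraph (Fin n) :=
  SimpleGraph.fromRel fun i j => ∃ k, eInit k = i ∧ eTerm k = j

/-- `C₁ = blkdiag(I_d, 0, …, 0)`: the leader's position-measurement matrix. -/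
def leaderC1 (d : ℕ) {n : ℕ} (leader : Fin n) :
    Matrix (Fin n × Fin d) (Fin n × Fin d) ℝ :=
  Matrix.of fun ia jb => if ia.1 = leader ∧ jb.1 = leader ∧ ia.2 = jb.2 then 1 else 0

end
section Helpers

open Matrix

lemma hbar_mulVec {d n m : ℕ} (eInit eTerm : Fin m → Fin n)
    (hends : ∀ k, eInit k ≠ eTerm k) (x : Fin n × Fin d → ℝ) (ka : Fin m × Fin d) :
    (hbar d eInit eTerm).mulVec x ka = x (eTerm ka.1, ka.2) - x (eInit ka.1, ka.2) := by
  obtain ⟨k, a⟩ := ka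
  simp only [Matrix.mulVec, dotProduct, hbar, incMat, Matrix.of_apply,
    Fintype.sum_prod_type, mul_ite, mul_one, mul_zero, ite_mul, zero_mul,
    Finset.sum_ite_eq, Finset.mem_univ, if_true]
  have key : ∀ i : Fin n,
      (if i = eTerm k then (1:ℝ) * x (i, a) else if i = eInit k then -1 * x (i, a) else 0) =
      (if i = eTerm k then x (eTerm k, a) else 0) +
        (if i = eInit k then -x (eInit k, a) else 0) := by
    intro i
    by_cases h1 : i = eTerm k
    · subst h1
      rw [if_pos rfl, if_pos rfl, if_neg (fun h => hends k h.symm), one_mul, add_zero]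
    · by_cases h2 : i = eInit k
      · subst h2
        rw [if_neg h1, if_neg h1, if_pos rfl, if_pos rfl, neg_one_mul, zero_add]
      · rw [if_neg h1, if_neg h1, if_neg h2, if_neg h2, add_zero]
  rw [Finset.sum_congr rfl (fun i _ => key i), Finset.sum_add_distrib,
    Finset.sum_ite_eq' Finset.univ (eTerm k), Finset.sum_ite_eq' Finset.univ (eInit k)]
  simp [sub_eq_add_neg]

lemma projMat_mulVec {d : ℕ} (y v : Fin d → ℝ) :
    (projMat y).mulVec v = v - (y ⬝ᵥ v) • y := by
  rw [projMat, Matrix.sub_mulVec, Matrix.one_mulVec]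
  funext i
  simp only [Pi.sub_apply, Pi.smul_apply, smul_eq_mul]
  congr 1
  simp only [Matrix.mulVec, dotProduct, Matrix.vecMulVec_apply]
  rw [Finset.sum_mul]
  exact Finset.sum_congr rfl fun j _ => by ring

lemma dotProduct_self_nonneg {d : ℕ} (v : Fin d → ℝ) : 0 ≤ v ⬝ᵥ v :=
  Finset.sum_nonneg fun i _ => mul_self_nonneg (v i)

lemma proj_bearing_edge {d n m : ℕ} (eInit eTerm : Fin m → Fin n)
    (p : Fin n → Fin d → ℝ) (k : Fin m) (hpk : p (eInit k) ≠ p (eTerm k)) :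
    (projMat (bearingVec eInit eTerm p k)).mulVec (edgeVec eInit eTerm p k) = 0 := by
  set v := edgeVec eInit eTerm p k with hv
  have hvne : v ≠ 0 := by
    rw [hv, edgeVec, sub_ne_zero]
    exact fun h => hpk h.symm
  have hdot : (0:ℝ) < v ⬝ᵥ v :=
    lt_of_le_of_ne (dotProduct_self_nonneg v)
      (fun h => hvne (dotProduct_self_eq_zero.mp h.symm))
  have hc : euclNorm v = Real.sqrt (v ⬝ᵥ v) := rfl
  have hcpos : 0 < euclNorm v := by rw [hc]; exact Real.sqrt_pos.mpr hdot
  have hcsq : euclNorm v * euclNorm v = v ⬝ᵥ v := by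
    rw [hc]; exact Real.mul_self_sqrt (le_of_lt hdot)
  have hb : bearingVec eInit eTerm p k = (euclNorm v)⁻¹ • v := rfl
  rw [projMat_mulVec, hb]
  have hgd : ((euclNorm v)⁻¹ • v) ⬝ᵥ v = euclNorm v := by
    rw [smul_dotProduct, smul_eq_mul, ← hcsq]
    field_simp
  rw [hgd, smul_smul, mul_inv_cancel₀ (ne_of_gt hcpos), one_smul, sub_self]

lemma blkdiag_mulVec {m d : ℕ} (f : Fin m → Matrix (Fin d) (Fin d) ℝ)
    (x : Fin m × Fin d → ℝ) (ka : Fin m × Fin d) :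
    (blkdiag f).mulVec x ka = (f ka.1).mulVec (fun b => x (ka.1, b)) ka.2 := by
  obtain ⟨k, a⟩ := ka
  simp [blkdiag, Matrix.mulVec, dotProduct, Fintype.sum_prod_type, ite_mul,
    Finset.sum_ite_eq, Finset.mem_univ]

lemma bearingLap_mulVec {d n m : ℕ} (eInit eTerm : Fin m → Fin n)
    (p : Fin n → Fin d → ℝ) (x : Fin n × Fin d → ℝ) :
    (bearingLap eInit eTerm p).mulVec x =
      (hbar d eInit eTerm)ᵀ.mulVec
        ((blkdiag (fun k => projMat (bearingVec eInit eTerm p k))).mulVec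
          ((hbar d eInit eTerm).mulVec x)) := by
  rw [bearingLap, Matrix.mulVec_mulVec, Matrix.mulVec_mulVec]

/-- The linear map `w ↦ 1_n ⊗ w`. -/
def tensMap (n d : ℕ) : (Fin d → ℝ) →ₗ[ℝ] (Fin n × Fin d → ℝ) where
  toFun w := fun ia => w ia.2
  map_add' _ _ := rfl
  map_smul' _ _ := rfl

end Helpers

/-- For a configuration with distinct endpoints on every edge,
the bearing Laplacian annihilates the configuration vector `p` and all
translations `1_n ⊗ w`; the span of these vectors (contained in `Null L_B(p)`)
has dimension `d + 1`, and `rank L_B(p) ≤ dn - d - 1`. -/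
theorem stmt4 {d n m : ℕ} (hd : 2 ≤ d) (hn : 2 ≤ n) (hm : 1 ≤ m)
    (eInit eTerm : Fin m → Fin n) (hends : ∀ k, eInit k ≠ eTerm k)
    (p : Fin n → Fin d → ℝ) (hp : ∀ k, p (eInit k) ≠ p (eTerm k)) :
    (bearingLap eInit eTerm p).mulVec (fun ia => p ia.1 ia.2) = 0 ∧
    (∀ w : Fin d → ℝ,
      (bearingLap eInit eTerm p).mulVec (fun ia => w ia.2) = 0) ∧
    Submodule.span ℝ
        ({fun ia => p ia.1 ia.2} ∪
          Set.range (fun (w : Fin d → ℝ) => fun (ia : Fin n × Fin d) => w ia.2)) ≤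
      LinearMap.ker (bearingLap eInit eTerm p).mulVecLin ∧
    Module.finrank ℝ
        (Submodule.span ℝ
          ({fun ia => p ia.1 ia.2} ∪
            Set.range (fun (w : Fin d → ℝ) => fun (ia : Fin n × Fin d) => w ia.2))) = d + 1 ∧
    (bearingLap eInit eTerm p).rank ≤ d * n - d - 1 := by
  have k0 : Fin m := ⟨0, hm⟩
  have i0 : Fin n := ⟨0, by omega⟩
  set phat : Fin n × Fin d → ℝ := fun ia => p ia.1 ia.2 with hphat
  -- Part 1
  have part1 : (bearingLap eInit eTerm p).mulVec phat = 0 := by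
    rw [bearingLap_mulVec]
    have h1 : (hbar d eInit eTerm).mulVec phat =
        fun ka => edgeVec eInit eTerm p ka.1 ka.2 := by
      funext ka
      rw [hbar_mulVec eInit eTerm hends]
      simp [hphat, edgeVec]
    rw [h1]
    have h2 : (blkdiag (fun k => projMat (bearingVec eInit eTerm p k))).mulVec
        (fun ka => edgeVec eInit eTerm p ka.1 ka.2) = 0 := by
      funext ka
      rw [blkdiag_mulVec]
      have h3 := proj_bearing_edge eInit eTerm p ka.1 (hp ka.1)
      calc (projMat (bearingVec eInit eTerm p ka.1)).mulVec
            (fun b => edgeVec eInit eTerm p ka.1 b) ka.2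
          = (projMat (bearingVec eInit eTerm p ka.1)).mulVec
            (edgeVec eInit eTerm p ka.1) ka.2 := rfl
        _ = 0 := by rw [h3]; rfl
    rw [h2, Matrix.mulVec_zero]
  -- Part 2
  have part2 : ∀ w : Fin d → ℝ,
      (bearingLap eInit eTerm p).mulVec (fun ia => w ia.2) = 0 := by
    intro w
    rw [bearingLap_mulVec]
    have h1 : (hbar d eInit eTerm).mulVec (fun ia => w ia.2) = 0 := by
      funext ka
      rw [hbar_mulVec eInit eTerm hends]
      simp
    rw [h1, Matrix.mulVec_zero, Matrix.mulVec_zero]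
  -- Part 3
  have part3 : Submodule.span ℝ
        ({phat} ∪ Set.range (fun (w : Fin d → ℝ) => fun (ia : Fin n × Fin d) => w ia.2)) ≤
      LinearMap.ker (bearingLap eInit eTerm p).mulVecLin := by
    rw [Submodule.span_le]
    rintro x hx
    rcases hx with hx | ⟨w, rfl⟩
    · rw [Set.mem_singleton_iff] at hx
      subst hx
      simpa [LinearMap.mem_ker] using part1
    · simpa [LinearMap.mem_ker] using part2 w
  -- Part 4
  have hrange : Set.range (fun (w : Fin d → ℝ) => fun (ia : Fin n × Fin d) => w ia.2)
      = Set.range ⇑(tensMap n d) := rfl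
  have part4 : Module.finrank ℝ
      (Submodule.span ℝ
        ({phat} ∪ Set.range (fun (w : Fin d → ℝ) => fun (ia : Fin n × Fin d) => w ia.2)))
      = d + 1 := by
    set W := LinearMap.range (tensMap n d) with hW
    have hWd : Module.finrank ℝ W = d := by
      rw [LinearMap.finrank_range_of_inj, Module.finrank_fintype_fun_eq_card, Fintype.card_fin]
      intro w1 w2 h
      funext a
      exact congrFun h (i0, a)
    have hpnot : phat ∉ W := by
      rintro ⟨w, hw⟩
      apply hp k0
      have h1 : ∀ i, p i = w := fun i => funext fun a => (congrFun hw (i, a)).symm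
      rw [h1, h1]
    have hpne : phat ≠ 0 := fun h => hpnot (h ▸ Submodule.zero_mem W)
    have hinf : W ⊓ Submodule.span ℝ {phat} = ⊥ := by
      rw [eq_bot_iff]
      rintro x hx
      rw [Submodule.mem_inf] at hx
      obtain ⟨hxW, hxS⟩ := hx
      obtain ⟨c, rfl⟩ := Submodule.mem_span_singleton.mp hxS
      rcases eq_or_ne c 0 with rfl | hc
      · simp
      · exact absurd (by simpa [smul_smul, inv_mul_cancel₀ hc] using W.smul_mem c⁻¹ hxW) hpnot
    have hsum := Submodule.finrank_sup_add_finrank_inf_eq W (Submodule.span ℝ {phat})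
    rw [hinf, finrank_bot, hWd, finrank_span_singleton hpne, add_zero] at hsum
    rw [hrange, Submodule.span_union, ← LinearMap.coe_range, Submodule.span_eq, sup_comm, ← hW,
      hsum]
  refine ⟨part1, part2, part3, part4, ?_⟩
  -- Part 5
  have h5 := LinearMap.finrank_range_add_finrank_ker (bearingLap eInit eTerm p).mulVecLin
  rw [Module.finrank_fintype_fun_eq_card, Fintype.card_prod, Fintype.card_fin, Fintype.card_fin,
    Nat.mul_comm] at h5
  have hker : d + 1 ≤ Module.finrank ℝ
      (LinearMap.ker (bearingLap eInit eTerm p).mulVecLin) := by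
    rw [← part4]; exact Submodule.finrank_mono part3
  have hrk : (bearingLap eInit eTerm p).rank
      = Module.finrank ℝ (LinearMap.range (bearingLap eInit eTerm p).mulVecLin) := rfl
  rw [hrk]
  obtain ⟨N, hN⟩ : ∃ N, d * n = N := ⟨_, rfl⟩
  rw [hN] at h5 ⊢
  clear * - h5 hker
  omega
end

section
/- Let A ∈ ℝ^{N×N} be constant, C : [0,∞) → ℝ^{q×N} continuous, Q ∈ ℝ^{q×q} and S ∈ ℝ^{N×N} symmetric, and κ ∈ ℝ. Suppose M : [0,∞) → ℝ^{N×N} is differentiable, takes symmetric invertible values, and solves the continuous Riccati equation Ṁ = AM + MAᵀ − M CᵀQC M + S, and suppose δ : [0,∞) → ℝ^N solves the observer error equation δ̇ = (A − κ M CᵀQ C) δ. Then for all t ≥ 0, d/dt [δ(t)ᵀ M(t)^{−1} δ(t)] = − δ(t)ᵀ ( (2κ−1) C(t)ᵀ Q C(t) + M(t)^{−1} S M(t)^{−1} ) δ(t). -/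
open Matrix MeasureTheory

lemma aux_inv_entry {N : ℕ} {M : ℝ → Matrix (Fin N) (Fin N) ℝ} {M' : Matrix (Fin N) (Fin N) ℝ}
    {t : ℝ} (hu : IsUnit (M t))
    (h : ∀ i j, HasDerivAt (fun s => M s i j) (M' i j) t) (i j : Fin N) :
    HasDerivAt (fun s => (M s)⁻¹ i j) ((-((M t)⁻¹ * M' * (M t)⁻¹)) i j) t := by
  letI : NormedRing (Matrix (Fin N) (Fin N) ℝ) := Matrix.linftyOpNormedRing
  letI : NormedAlgebra ℝ (Matrix (Fin N) (Fin N) ℝ) := Matrix.linftyOpNormedAlgebra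
  have hM : HasDerivAt M M' t := by
    have h1 : HasDerivAt
        (fun s => ∑ a : Fin N, ∑ b : Fin N, Matrix.single a b (M s a b))
        (∑ a : Fin N, ∑ b : Fin N, Matrix.single a b (M' a b)) t := by
      refine HasDerivAt.fun_sum fun a _ => HasDerivAt.fun_sum fun b _ => ?_
      simpa [Matrix.smul_single, smul_eq_mul, mul_one] using
        (h a b).smul_const (Matrix.single a b (1 : ℝ))
    simpa [← Matrix.matrix_eq_sum_single] using h1
  obtain ⟨u, hu'⟩ := hu
  have h1 : HasFDerivAt Ring.inverse
      (-(ContinuousLinearMap.mulLeftRight ℝ _ (↑u⁻¹) (↑u⁻¹))) (M t) := by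
    have := hasFDerivAt_ringInverse (𝕜 := ℝ) u
    rwa [hu'] at this
  have hui : ((↑u⁻¹ : Matrix (Fin N) (Fin N) ℝ)) = (M t)⁻¹ := by
    rw [Matrix.nonsing_inv_eq_ringInverse, ← hu', Ring.inverse_unit]
  have h2 : HasDerivAt (fun s => (M s)⁻¹) (-((M t)⁻¹ * M' * (M t)⁻¹)) t := by
    have h3 := h1.comp_hasDerivAt t hM
    simp only [Matrix.nonsing_inv_eq_ringInverse]
    convert h3 using 1
    case e'_9 =>
      simp [ContinuousLinearMap.mulLeftRight_apply, hui, ← Matrix.nonsing_inv_eq_ringInverse,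
        Matrix.mul_assoc]
    all_goals rfl
  let L : Matrix (Fin N) (Fin N) ℝ →ₗ[ℝ] ℝ :=
    { toFun := fun X => X i j, map_add' := by intros; rfl, map_smul' := by intros; rfl }
  exact (L.toContinuousLinearMap.hasFDerivAt).comp_hasDerivAt t h2

attribute [local instance] Matrix.normedAddCommGroup Matrix.normedSpace

lemma aux_quad {N : ℕ} {δ : ℝ → Fin N → ℝ} {δ' : Fin N → ℝ}
    {P : ℝ → Matrix (Fin N) (Fin N) ℝ} {P' : Matrix (Fin N) (Fin N) ℝ} {t : ℝ}
    (hδ : ∀ i, HasDerivAt (fun s => δ s i) (δ' i) t)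
    (hP : ∀ i j, HasDerivAt (fun s => P s i j) (P' i j) t) :
    HasDerivAt (fun s => δ s ⬝ᵥ (P s).mulVec (δ s))
      (δ' ⬝ᵥ (P t).mulVec (δ t) + δ t ⬝ᵥ P'.mulVec (δ t) + δ t ⬝ᵥ (P t).mulVec δ') t := by
  have h1 : HasDerivAt (fun s => ∑ i, δ s i * ∑ j, P s i j * δ s j)
      (∑ i, ((δ' i * ∑ j, P t i j * δ t j) +
        δ t i * ∑ j, (P' i j * δ t j + P t i j * δ' j))) t := by
    refine HasDerivAt.fun_sum fun i _ => ?_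
    exact (hδ i).mul (HasDerivAt.fun_sum fun j _ => (hP i j).mul (hδ j))
  convert h1 using 1
  all_goals simp only [dotProduct, Matrix.mulVec, Finset.sum_add_distrib, mul_add,
    Finset.mul_sum]
  all_goals ring_nf

/-- Derivative of the Lyapunov function `δᵀ M⁻¹ δ` along the Riccati
equation `Ṁ = AM + MAᵀ - MCᵀQCM + S` and the observer error equation
`δ̇ = (A - κ M CᵀQ C) δ`:
`d/dt (δᵀM⁻¹δ) = -δᵀ((2κ-1)CᵀQC + M⁻¹SM⁻¹)δ`. -/
theorem stmt6 {N q : ℕ} (A : Matrix (Fin N) (Fin N) ℝ)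
    (C : ℝ → Matrix (Fin q) (Fin N) ℝ) (hC : ContinuousOn C (Set.Ici 0))
    (Q : Matrix (Fin q) (Fin q) ℝ) (hQ : Q.IsSymm)
    (S : Matrix (Fin N) (Fin N) ℝ) (hS : S.IsSymm)
    (κ : ℝ) (M : ℝ → Matrix (Fin N) (Fin N) ℝ)
    (hMsymm : ∀ t ≥ (0 : ℝ), (M t).IsSymm)
    (hMinv : ∀ t ≥ (0 : ℝ), IsUnit (M t))
    (hM : ∀ t ≥ (0 : ℝ),
      HasDerivAt M (A * M t + M t * Aᵀ - M t * (C t)ᵀ * Q * C t * M t + S) t)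
    (δ : ℝ → Fin N → ℝ)
    (hδ : ∀ t ≥ (0 : ℝ),
      HasDerivAt δ ((A - κ • (M t * (C t)ᵀ * Q * C t)).mulVec (δ t)) t) :
    ∀ t ≥ (0 : ℝ),
      HasDerivAt (fun s => δ s ⬝ᵥ ((M s)⁻¹).mulVec (δ s))
        (-(δ t ⬝ᵥ
          (((2 * κ - 1) • ((C t)ᵀ * Q * C t) + (M t)⁻¹ * S * (M t)⁻¹).mulVec (δ t)))) t := by
  intro t ht
  set m := M t with hm
  set n := m⁻¹ with hn
  set G := (C t)ᵀ * Q * C t with hGdef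
  set m' := A * m + m * Aᵀ - m * (C t)ᵀ * Q * C t * m + S with hm'
  have hdet : IsUnit m.det := (Matrix.isUnit_iff_isUnit_det m).mp (hMinv t ht)
  have hnm : n * m = 1 := Matrix.nonsing_inv_mul m hdet
  have hmn : m * n = 1 := Matrix.mul_nonsing_inv m hdet
  have hmT : mᵀ = m := hMsymm t ht
  have hnT : nᵀ = n := by rw [hn, Matrix.transpose_nonsing_inv, hmT]
  have hGT : Gᵀ = G := by
    rw [hGdef]; simp [Matrix.transpose_mul, hQ.eq, Matrix.mul_assoc]
  -- entrywise derivatives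
  have hMij : ∀ i j, HasDerivAt (fun s => M s i j) (m' i j) t := fun i j =>
    hasDerivAt_pi.mp (hasDerivAt_pi.mp (hM t ht) i) j
  have hδi : ∀ i, HasDerivAt (fun s => δ s i)
      (((A - κ • (m * G)).mulVec (δ t)) i) t := fun i => by
    have := hasDerivAt_pi.mp (hδ t ht) i
    simpa [hGdef, Matrix.mul_assoc] using this
  have hPij := aux_inv_entry (hMinv t ht) hMij
  have key := aux_quad hδi hPij
  convert key using 1
  set v := δ t with hv
  set Y := A - κ • (m * G) with hY
  -- rewrite all three terms as quadratic forms
  have e1 : (Y.mulVec v) ⬝ᵥ n.mulVec v = v ⬝ᵥ ((Yᵀ * n).mulVec v) := by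
    rw [← Matrix.vecMul_transpose, ← Matrix.dotProduct_mulVec, Matrix.mulVec_mulVec]
  have e3 : v ⬝ᵥ n.mulVec (Y.mulVec v) = v ⬝ᵥ ((n * Y).mulVec v) := by
    rw [Matrix.mulVec_mulVec]
  rw [e1, e3, ← dotProduct_add, ← dotProduct_add, ← Matrix.add_mulVec,
    ← Matrix.add_mulVec, ← dotProduct_neg, ← Matrix.neg_mulVec]
  congr 1
  -- the matrix identity
  have hBm : ∀ X : Matrix (Fin N) (Fin N) ℝ, n * (m * X) = X := fun X => by
    rw [← Matrix.mul_assoc, hnm, Matrix.one_mul]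
  have hBn : ∀ X : Matrix (Fin N) (Fin N) ℝ, m * (n * X) = X := fun X => by
    rw [← Matrix.mul_assoc, hmn, Matrix.one_mul]
  have hm'G : m' = A * m + m * Aᵀ - m * G * m + S := by
    rw [hm', hGdef]; simp only [Matrix.mul_assoc]
  have key1 : Yᵀ * n = Aᵀ * n - κ • G := by
    rw [hY, Matrix.transpose_sub, Matrix.transpose_smul, Matrix.transpose_mul, hmT, hGT,
      Matrix.sub_mul, smul_mul_assoc, Matrix.mul_assoc, hmn, Matrix.mul_one]
  have key2 : n * Y = n * A - κ • G := by
    rw [hY, Matrix.mul_sub, mul_smul_comm, ← Matrix.mul_assoc, hnm, Matrix.one_mul]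
  have key3 : n * m' * n = n * A + Aᵀ * n - G + n * S * n := by
    rw [hm'G, Matrix.mul_add, Matrix.mul_sub, Matrix.mul_add, Matrix.add_mul, Matrix.sub_mul,
      Matrix.add_mul]
    simp only [Matrix.mul_assoc, hmn, Matrix.mul_one, hBm]
  have hmat : -((2 * κ - 1) • G + n * S * n) = Yᵀ * n + -(n * m' * n) + n * Y := by
    rw [key1, key2, key3]
    ext i j
    simp only [Matrix.add_apply, Matrix.sub_apply, Matrix.neg_apply, Matrix.smul_apply,
      smul_eq_mul]
    ring
  rw [hmat]
end

section
/- Let 𝒢 be a connected undirected graph on n vertices with m edges, incidence matrix H, H̄ = H ⊗ I_d, L = H̄ᵀH̄, and let p(t) be a continuous configuration in ℝ^d with well-defined edge bearings ḡ_k(t). Suppose the formation is BPE with constants T, μ > 0, and suppose every edge whose bearing is not persistently exciting has a constant bearing ḡ_k(t) ≡ ḡ_k. Define the pseudo-bearing Laplacian L̄_B = H̄ᵀ Σ̄ H̄ with Σ̄ = blkdiag(σ_1,…,σ_m), where σ_k = I_d if ḡ_k is PE and σ_k = π_{ḡ_k} (a constant projector) otherwise. Then L̄_B is a constant symmetric positive-semidefinite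 matrix satisfying L̄_B ⪰ L_B(p(t)) for all t ≥ 0, L̄_B ⪰ (1/T) ∫_t^{t+T} L_B(p(τ)) dτ for all t ≥ 0, and L̄_B ⪰ μ L. -/
open Matrix MeasureTheory

open scoped Classical in
/-- The pseudo-bearing Laplacian `L̄_B = H̄ᵀ Σ̄ H̄` with `σ_k = I_d` when the `k`-th
bearing is PE and `σ_k = π_{ḡ_k}` (the constant projector) otherwise. -/
noncomputable def pseudoLap {d n m : ℕ} (eInit eTerm : Fin m → Fin n)
    (p : ℝ → Fin n → Fin d → ℝ) : Matrix (Fin n × Fin d) (Fin n × Fin d) ℝ :=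
  (hbar d eInit eTerm)ᵀ *
    blkdiag (fun k =>
      if BearingPE (fun t => bearingVec eInit eTerm (p t) k) then 1
      else projMat (bearingVec eInit eTerm (p 0) k)) *
    hbar d eInit eTerm


section AuxLemmas

open Matrix

lemma psd_quad {ι : Type*} [Fintype ι] {M : Matrix ι ι ℝ} (h : M.PosSemidef) (x : ι → ℝ) :
    0 ≤ x ⬝ᵥ M.mulVec x := by
  simpa using h.dotProduct_mulVec_nonneg x

lemma dot_blkdiag {m d : ℕ} (f : Fin m → Matrix (Fin d) (Fin d) ℝ) (x : Fin m × Fin d → ℝ) :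
    x ⬝ᵥ (blkdiag f).mulVec x
      = ∑ k, (fun a => x (k, a)) ⬝ᵥ (f k).mulVec (fun a => x (k, a)) := by
  simp only [dotProduct, Matrix.mulVec, dotProduct, blkdiag, Matrix.of_apply,
    Fintype.sum_prod_type, ite_mul, zero_mul, Finset.sum_ite_irrel, Finset.sum_const_zero,
    Finset.sum_ite_eq, Finset.mem_univ, if_true]

lemma blkdiag_conjTranspose {m d : ℕ} (f : Fin m → Matrix (Fin d) (Fin d) ℝ) :
    (blkdiag f)ᴴ = blkdiag (fun k => (f k)ᴴ) := by
  ext ⟨k, a⟩ ⟨l, b⟩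
  simp only [conjTranspose_apply, blkdiag, Matrix.of_apply, star_trivial]
  rcases eq_or_ne k l with h | h
  · subst h; simp
  · simp [h, Ne.symm h]

lemma blkdiag_isHermitian {m d : ℕ} {f : Fin m → Matrix (Fin d) (Fin d) ℝ}
    (hf : ∀ k, (f k).IsHermitian) : (blkdiag f).IsHermitian := by
  unfold Matrix.IsHermitian
  rw [blkdiag_conjTranspose]
  have h : (fun k => (f k)ᴴ) = f := funext fun k => hf k
  rw [h]

lemma blkdiag_posSemidef {m d : ℕ} {f : Fin m → Matrix (Fin d) (Fin d) ℝ}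
    (hf : ∀ k, (f k).PosSemidef) : (blkdiag f).PosSemidef := by
  refine Matrix.PosSemidef.of_dotProduct_mulVec_nonneg (blkdiag_isHermitian fun k => (hf k).1) fun x => ?_
  simp only [star_trivial]
  rw [dot_blkdiag]
  exact Finset.sum_nonneg fun k _ => psd_quad (hf k) _

lemma blkdiag_sub {m d : ℕ} (f g : Fin m → Matrix (Fin d) (Fin d) ℝ) :
    blkdiag f - blkdiag g = blkdiag (fun k => f k - g k) := by
  ext ⟨k, a⟩ ⟨l, b⟩
  simp only [Matrix.sub_apply, blkdiag, Matrix.of_apply]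
  rcases eq_or_ne k l with h | h
  · subst h; simp
  · simp [h]

lemma transpose_mul_mul_posSemidef {ι κ : Type*} [Fintype ι] [Fintype κ] [DecidableEq ι]
    {S : Matrix ι ι ℝ} (hS : S.PosSemidef) (B : Matrix ι κ ℝ) :
    (Bᵀ * S * B).PosSemidef := by
  have := hS.conjTranspose_mul_mul_same B
  rwa [conjTranspose_eq_transpose_of_trivial] at this

lemma projMat_isHermitian {d : ℕ} (y : Fin d → ℝ) : (projMat y).IsHermitian := by
  unfold Matrix.IsHermitian
  ext i j
  simp [projMat, Matrix.vecMulVec_apply, Matrix.one_apply, mul_comm, eq_comm]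

lemma vecMulVec_self_posSemidef {d : ℕ} (y : Fin d → ℝ) :
    (Matrix.vecMulVec y y).PosSemidef := by
  refine Matrix.PosSemidef.of_dotProduct_mulVec_nonneg ?_ ?_
  · unfold Matrix.IsHermitian
    ext i j
    simp [Matrix.vecMulVec_apply, mul_comm]
  · intro x
    simp only [star_trivial]
    have hx : x ⬝ᵥ (Matrix.vecMulVec y y).mulVec x = (y ⬝ᵥ x) * (y ⬝ᵥ x) := by
      simp only [dotProduct, Matrix.mulVec, dotProduct, Matrix.vecMulVec_apply,
        Finset.mul_sum, Finset.sum_mul]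
      rw [Finset.sum_comm]
      apply Finset.sum_congr rfl; intro i _
      apply Finset.sum_congr rfl; intro j _
      ring
    rw [hx]
    exact mul_self_nonneg _

lemma projMat_posSemidef {d : ℕ} {y : Fin d → ℝ} (hy : y ⬝ᵥ y = 1) :
    (projMat y).PosSemidef := by
  refine Matrix.PosSemidef.of_dotProduct_mulVec_nonneg (projMat_isHermitian y) fun x => ?_
  simp only [star_trivial]
  have hq : x ⬝ᵥ (projMat y).mulVec x = x ⬝ᵥ x - (y ⬝ᵥ x) * (y ⬝ᵥ x) := by
    have h1 : projMat y = 1 - Matrix.vecMulVec y y := rfl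
    rw [h1, Matrix.sub_mulVec, dotProduct_sub, Matrix.one_mulVec]
    congr 1
    simp only [dotProduct, Matrix.mulVec, dotProduct, Matrix.vecMulVec_apply,
      Finset.mul_sum, Finset.sum_mul]
    rw [Finset.sum_comm]
    apply Finset.sum_congr rfl; intro i _
    apply Finset.sum_congr rfl; intro j _
    ring
  rw [hq, sub_nonneg]
  have hcs := Finset.sum_mul_sq_le_sq_mul_sq Finset.univ y x
  have h2 : (y ⬝ᵥ x) * (y ⬝ᵥ x) = (∑ i, y i * x i) ^ 2 := by
    simp [dotProduct, sq]
  have h3 : y ⬝ᵥ y = ∑ i, y i ^ 2 := by simp [dotProduct, sq]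
  have h4 : x ⬝ᵥ x = ∑ i, x i ^ 2 := by simp [dotProduct, sq]
  rw [h2, h4]
  calc (∑ i, y i * x i) ^ 2 ≤ (∑ i, y i ^ 2) * ∑ i, x i ^ 2 := hcs
    _ = ∑ i, x i ^ 2 := by rw [← h3, hy, one_mul]

lemma one_posSemidef {d : ℕ} : (1 : Matrix (Fin d) (Fin d) ℝ).PosSemidef := by
  refine Matrix.PosSemidef.of_dotProduct_mulVec_nonneg Matrix.isHermitian_one fun x => ?_
  simp only [star_trivial, Matrix.one_mulVec]
  exact Finset.sum_nonneg fun i _ => mul_self_nonneg _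

lemma zero_posSemidef {d : ℕ} : (0 : Matrix (Fin d) (Fin d) ℝ).PosSemidef := by
  refine Matrix.PosSemidef.of_dotProduct_mulVec_nonneg (by simp [Matrix.IsHermitian]) fun x => ?_
  simp

lemma bearing_unit {d n m : ℕ} (eInit eTerm : Fin m → Fin n) (q : Fin n → Fin d → ℝ)
    (k : Fin m) (h : q (eInit k) ≠ q (eTerm k)) :
    bearingVec eInit eTerm q k ⬝ᵥ bearingVec eInit eTerm q k = 1 := by
  set v := edgeVec eInit eTerm q k with hv
  have hvne : v ≠ 0 := by
    rw [hv]
    unfold edgeVec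
    intro hc
    exact h (by funext i; have := congrFun hc i; simpa [sub_eq_zero, eq_comm] using this)
  have hs0 : v ⬝ᵥ v ≠ 0 := fun hc => hvne (dotProduct_self_eq_zero.mp hc)
  have hsn : 0 ≤ v ⬝ᵥ v := Finset.sum_nonneg fun i _ => mul_self_nonneg _
  have key : (Real.sqrt (v ⬝ᵥ v))⁻¹ * ((Real.sqrt (v ⬝ᵥ v))⁻¹ * (v ⬝ᵥ v)) = 1 := by
    rw [← mul_assoc, ← mul_inv, Real.mul_self_sqrt hsn]
    field_simp
  unfold bearingVec euclNorm
  rw [← hv, smul_dotProduct, dotProduct_smul, smul_eq_mul, smul_eq_mul]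
  exact key

end AuxLemmas

/-- Lemma 4. For a BPE formation whose non-PE bearings are constant,
the pseudo-bearing Laplacian `L̄_B` is a constant symmetric positive-semidefinite matrix
with `L̄_B ⪰ L_B(p(t))`, `L̄_B ⪰ (1/T)∫_t^{t+T} L_B(p(τ))dτ`, and `L̄_B ⪰ μ L`. -/
theorem stmt10 {d n m : ℕ} (hd : 2 ≤ d) (hn : 2 ≤ n)
    (eInit eTerm : Fin m → Fin n) (hends : ∀ k, eInit k ≠ eTerm k)
    (hconn : (formationGraph eInit eTerm).Connected)
    (p : ℝ → Fin n → Fin d → ℝ)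
    (hcont : ContinuousOn p (Set.Ici 0))
    (hwell : ∀ t ≥ (0 : ℝ), ∀ k, p t (eInit k) ≠ p t (eTerm k))
    (T μ : ℝ) (hT : 0 < T) (hμ : 0 < μ)
    (hbpe : ∀ t ≥ (0 : ℝ), ∀ x : Fin n × Fin d → ℝ,
      μ * (x ⬝ᵥ (lapMat d eInit eTerm).mulVec x) ≤
        (1 / T) * ∫ τ in t..(t + T), x ⬝ᵥ (bearingLap eInit eTerm (p τ)).mulVec x)
    (hconst : ∀ k, ¬ BearingPE (fun t => bearingVec eInit eTerm (p t) k) →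
      ∀ t ≥ (0 : ℝ), bearingVec eInit eTerm (p t) k = bearingVec eInit eTerm (p 0) k) :
    (pseudoLap eInit eTerm p).IsSymm ∧
    (pseudoLap eInit eTerm p).PosSemidef ∧
    (∀ t ≥ (0 : ℝ), (pseudoLap eInit eTerm p - bearingLap eInit eTerm (p t)).PosSemidef) ∧
    (∀ t ≥ (0 : ℝ), ∀ x : Fin n × Fin d → ℝ,
      (1 / T) * (∫ τ in t..(t + T), x ⬝ᵥ (bearingLap eInit eTerm (p τ)).mulVec x) ≤
        x ⬝ᵥ (pseudoLap eInit eTerm p).mulVec x) ∧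
    (pseudoLap eInit eTerm p - μ • lapMat d eInit eTerm).PosSemidef := by
  classical
  set A := hbar d eInit eTerm with hA
  set Sig : Fin m → Matrix (Fin d) (Fin d) ℝ :=
    fun k => if BearingPE (fun t => bearingVec eInit eTerm (p t) k) then 1
             else projMat (bearingVec eInit eTerm (p 0) k) with hSig
  have hPL : pseudoLap eInit eTerm p = Aᵀ * blkdiag Sig * A := rfl
  have hSigPSD : ∀ k, (Sig k).PosSemidef := by
    intro k
    by_cases hk : BearingPE (fun t => bearingVec eInit eTerm (p t) k)
    · simp only [hSig, if_pos hk]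
      exact one_posSemidef
    · simp only [hSig, if_neg hk]
      exact projMat_posSemidef (bearing_unit eInit eTerm (p 0) k (hwell 0 le_rfl k))
  have hPSD : (pseudoLap eInit eTerm p).PosSemidef := by
    rw [hPL]
    exact transpose_mul_mul_posSemidef (blkdiag_posSemidef hSigPSD) A
  have h3 : ∀ t ≥ (0 : ℝ),
      (pseudoLap eInit eTerm p - bearingLap eInit eTerm (p t)).PosSemidef := by
    intro t ht
    have hdiff : pseudoLap eInit eTerm p - bearingLap eInit eTerm (p t)
        = Aᵀ * blkdiag (fun k => Sig k - projMat (bearingVec eInit eTerm (p t) k)) * A := by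
      rw [hPL]
      unfold bearingLap
      rw [← hA, ← Matrix.sub_mul, ← Matrix.mul_sub, blkdiag_sub]
    rw [hdiff]
    refine transpose_mul_mul_posSemidef (blkdiag_posSemidef fun k => ?_) A
    by_cases hk : BearingPE (fun t => bearingVec eInit eTerm (p t) k)
    · have h1 : Sig k = 1 := by simp only [hSig, if_pos hk]
      rw [h1]
      have h2 : (1 : Matrix (Fin d) (Fin d) ℝ) - projMat (bearingVec eInit eTerm (p t) k)
          = Matrix.vecMulVec (bearingVec eInit eTerm (p t) k) (bearingVec eInit eTerm (p t) k) := by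
        unfold projMat
        exact sub_sub_cancel _ _
      rw [h2]
      exact vecMulVec_self_posSemidef _
    · have h1 : Sig k = projMat (bearingVec eInit eTerm (p 0) k) := by
        simp only [hSig, if_neg hk]
      rw [h1, hconst k hk t ht, sub_self]
      exact zero_posSemidef
  have h4 : ∀ t ≥ (0 : ℝ), ∀ x : Fin n × Fin d → ℝ,
      (1 / T) * (∫ τ in t..(t + T), x ⬝ᵥ (bearingLap eInit eTerm (p τ)).mulVec x) ≤
        x ⬝ᵥ (pseudoLap eInit eTerm p).mulVec x := by
    intro t ht x
    set C := x ⬝ᵥ (pseudoLap eInit eTerm p).mulVec x with hC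
    have hC0 : 0 ≤ C := psd_quad hPSD x
    have hub : ∀ τ ∈ Set.Icc t (t + T), x ⬝ᵥ (bearingLap eInit eTerm (p τ)).mulVec x ≤ C := by
      intro τ hτ
      have hτ0 : (0 : ℝ) ≤ τ := le_trans ht hτ.1
      have := psd_quad (h3 τ hτ0) x
      rw [Matrix.sub_mulVec, dotProduct_sub, sub_nonneg] at this
      exact this
    by_cases hint : IntervalIntegrable
        (fun τ => x ⬝ᵥ (bearingLap eInit eTerm (p τ)).mulVec x) volume t (t + T)
    · have hmono := intervalIntegral.integral_mono_on
        (by linarith : t ≤ t + T) hint (intervalIntegrable_const (c := C)) hub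
      rw [intervalIntegral.integral_const, add_sub_cancel_left, smul_eq_mul] at hmono
      calc (1 / T) * (∫ τ in t..(t + T), x ⬝ᵥ (bearingLap eInit eTerm (p τ)).mulVec x)
          ≤ (1 / T) * (T * C) := by
            apply mul_le_mul_of_nonneg_left hmono
            positivity
        _ = C := by field_simp
    · rw [intervalIntegral.integral_undef hint, mul_zero]
      exact hC0
  refine ⟨?_, hPSD, h3, h4, ?_⟩
  · show (pseudoLap eInit eTerm p)ᵀ = pseudoLap eInit eTerm p
    rw [← Matrix.conjTranspose_eq_transpose_of_trivial]
    exact hPSD.1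
  · have hLherm : (lapMat d eInit eTerm).IsHermitian := by
      unfold lapMat
      rw [← Matrix.conjTranspose_eq_transpose_of_trivial]
      exact Matrix.isHermitian_conjTranspose_mul_self _
    refine Matrix.PosSemidef.of_dotProduct_mulVec_nonneg ?_ ?_
    · have hsmul : (μ • lapMat d eInit eTerm).IsHermitian := by
        unfold Matrix.IsHermitian
        rw [Matrix.conjTranspose_smul, hLherm.eq]
        simp
      exact hPSD.1.sub hsmul
    · intro x
      simp only [star_trivial]
      rw [Matrix.sub_mulVec, dotProduct_sub, sub_nonneg, Matrix.smul_mulVec,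
        dotProduct_smul, smul_eq_mul]
      calc μ * (x ⬝ᵥ (lapMat d eInit eTerm).mulVec x)
          ≤ (1 / T) * ∫ τ in (0:ℝ)..(0 + T), x ⬝ᵥ (bearingLap eInit eTerm (p τ)).mulVec x :=
            hbpe 0 le_rfl x
        _ ≤ x ⬝ᵥ (pseudoLap eInit eTerm p).mulVec x := h4 0 le_rfl x
end

section
/- Let D ∈ ℝ^{N×N} be symmetric positive definite and let κ₁, κ₂ > 0. Then the block matrix F = [[−κ₁ D, I_N],[−κ₂ D, 0_N]] ∈ ℝ^{2N×2N} is Hurwitz, i.e., every complex eigenvalue of F has strictly negative real part. Equivalently, there exist symmetric positive definite matrices P, Q̃ ∈ ℝ^{2N×2N} with Fᵀ P + P F = −Q̃. -/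
open Matrix MeasureTheory

noncomputable section

/-- `A = [[0, I],[0, 0]]`: the double-integrator system matrix. -/
def amat (ι : Type*) [Fintype ι] [DecidableEq ι] : Matrix (ι ⊕ ι) (ι ⊕ ι) ℝ :=
  Matrix.fromBlocks 0 1 0 0

/-- `D ⬝ [I 0]`: output matrix reading the first (position) block through `D`. -/
def outMat {ι : Type*} [Fintype ι] [DecidableEq ι] (D : Matrix ι ι ℝ) :
    Matrix ι (ι ⊕ ι) ℝ :=
  D * Matrix.fromCols 1 0

end

/-! Hurwitz stability follows from a Lyapunov pair: if `Fᴴ P + P F = -Q` with `P, Q ≻ 0` and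
`F v = z v`, then `v* (Fᴴ P + P F) v = 2 Re z · v* P v` equals `-v* Q v < 0`, so `Re z < 0`.
The pair for `F` is a Lyapunov pair of the scalar system `[[-κ₁ d, 1], [-κ₂ d, 0]]` whose entries
are polynomials in `d`, so it lifts verbatim to the commuting blocks `D` and `1`. Positivity of
`P` comes from splitting it into the positive semidefinite form `(κ₂ x - κ₁ y)ᵀ D (κ₂ x - κ₁ y)`
plus a positive definite block diagonal. -/

open scoped ComplexOrder

namespace Matrix

variable {n : Type*} [Fintype n]

section PosDef

variable {𝕜 : Type*} [RCLike 𝕜]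

lemma PosDef.pow [DecidableEq n] {M : Matrix n n 𝕜} (hM : M.PosDef) (k : ℕ) :
    (M ^ k).PosDef := by
  rw [(hM.posSemidef.pow k).posDef_iff_det_ne_zero, det_pow]
  exact pow_ne_zero _ hM.det_pos.ne'

lemma PosDef.fromBlocks_zero {m : Type*} [Fintype m] [DecidableEq m] [DecidableEq n]
    {A : Matrix m m 𝕜} {B : Matrix n n 𝕜} (hA : A.PosDef) (hB : B.PosDef) :
    (fromBlocks A 0 0 B).PosDef := by
  have : Invertible A := hA.isUnit.invertible
  have hPSD : (fromBlocks A 0 0 B).PosSemidef := by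
    simpa using (PosDef.fromBlocks₁₁ (0 : Matrix m n 𝕜) B hA).2 (by simpa using hB.posSemidef)
  rw [hPSD.posDef_iff_det_ne_zero, det_fromBlocks_zero₂₁]
  exact mul_ne_zero hA.det_pos.ne' hB.det_pos.ne'

lemma PosDef.map_algebraMap [DecidableEq n] {P : Matrix n n ℝ} (hP : P.PosDef) :
    (P.map (algebraMap ℝ 𝕜)).PosDef := by
  open scoped MatrixOrder in
  obtain ⟨B, rfl⟩ := CStarAlgebra.nonneg_iff_eq_star_mul_self.mp hP.posSemidef.nonneg
  have hmap : (star B * B).map (algebraMap ℝ 𝕜) =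
      (B.map (algebraMap ℝ 𝕜))ᴴ * B.map (algebraMap ℝ 𝕜) := by
    rw [Matrix.map_mul, star_eq_conjTranspose, conjTranspose_map _ (fun _ => by simp)]
  have hPSD : ((star B * B).map (algebraMap ℝ 𝕜)).PosSemidef :=
    hmap ▸ posSemidef_conjTranspose_mul_self _
  rw [hPSD.posDef_iff_det_ne_zero, ← RingHom.mapMatrix_apply, ← RingHom.map_det]
  simpa using hP.det_pos.ne'

end PosDef

lemma posSemidef_fromBlocks_smul {D : Matrix n n ℝ} (hD : D.PosSemidef) (a b : ℝ) :
    (fromBlocks ((a ^ 2) • D) (-(a * b) • D) (-(a * b) • D) ((b ^ 2) • D)).PosSemidef := by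
  classical
  have h := hD.mul_mul_conjTranspose_same (fromRows (a • 1 : Matrix n n ℝ) (-(b • 1) : Matrix n n ℝ))
  convert h using 1
  rw [conjTranspose_fromRows_eq_fromCols_conjTranspose, fromRows_mul, fromRows_mul_fromCols]
  simp only [conjTranspose_smul, conjTranspose_neg, conjTranspose_one, star_trivial]
  congr 1 <;> simp [smul_smul, pow_two, mul_comm]

lemma exists_mulVec_eq_smul_of_mem_spectrum {K : Type*} [Field K] [DecidableEq n]
    {F : Matrix n n K} {z : K} (hz : z ∈ spectrum K F) : ∃ v ≠ 0, F *ᵥ v = z • v := by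
  rw [← spectrum_toLin', ← Module.End.hasEigenvalue_iff_mem_spectrum] at hz
  obtain ⟨v, hv⟩ := hz.exists_hasEigenvector
  exact ⟨v, hv.2, by simpa using hv.apply_eq_smul⟩

theorem re_lt_zero_of_mem_spectrum_of_lyapunov {𝕜 : Type*} [RCLike 𝕜] [DecidableEq n]
    {F P Q : Matrix n n 𝕜} (hP : P.PosDef) (hQ : Q.PosDef) (hlyap : Fᴴ * P + P * F = -Q)
    {z : 𝕜} (hz : z ∈ spectrum 𝕜 F) : RCLike.re z < 0 := by
  obtain ⟨v, hv, hFv⟩ := exists_mulVec_eq_smul_of_mem_spectrum hz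
  have hquad : star v ⬝ᵥ (Fᴴ * P + P * F) *ᵥ v = (star z + z) * (star v ⬝ᵥ P *ᵥ v) := by
    rw [add_mulVec, dotProduct_add, ← mulVec_mulVec, ← mulVec_mulVec, hFv, dotProduct_mulVec,
      vecMul_conjTranspose, star_star, hFv, star_smul, smul_dotProduct, mulVec_smul,
      dotProduct_smul, smul_eq_mul, smul_eq_mul, add_mul]
  rw [hlyap, neg_mulVec, dotProduct_neg, RCLike.star_def, add_comm, RCLike.add_conj] at hquad
  have hre := congrArg RCLike.re hquad
  rw [map_neg, mul_assoc, ← RCLike.ofReal_ofNat, RCLike.re_ofReal_mul, RCLike.re_ofReal_mul] at hre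
  nlinarith [hP.re_dotProduct_pos hv, hQ.re_dotProduct_pos hv]

theorem re_lt_zero_of_mem_spectrum_map_of_lyapunov {𝕜 : Type*} [RCLike 𝕜] [DecidableEq n]
    {F P Q : Matrix n n ℝ} (hP : P.PosDef) (hQ : Q.PosDef) (hlyap : Fᵀ * P + P * F = -Q)
    {z : 𝕜} (hz : z ∈ spectrum 𝕜 (F.map (algebraMap ℝ 𝕜))) : RCLike.re z < 0 := by
  refine re_lt_zero_of_mem_spectrum_of_lyapunov hP.map_algebraMap hQ.map_algebraMap ?_ hz
  have h := congrArg (algebraMap ℝ 𝕜).mapMatrix hlyap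
  rw [map_add, map_mul, map_mul, map_neg] at h
  rwa [← conjTranspose_map _ (fun _ => by simp), conjTranspose_eq_transpose_of_trivial]

section Observer

variable [DecidableEq n]

def observerLyapunovP (κ₁ κ₂ : ℝ) (D : Matrix n n ℝ) : Matrix (n ⊕ n) (n ⊕ n) ℝ :=
  fromBlocks ((κ₁ ^ 2 * κ₂) • D ^ 2 + (2 * κ₂ ^ 2) • D) (-(κ₁ * κ₂) • D) (-(κ₁ * κ₂) • D)
    ((2 * κ₂) • 1 + (2 * κ₁ ^ 2) • D)

def observerLyapunovQ (κ₁ κ₂ : ℝ) (D : Matrix n n ℝ) : Matrix (n ⊕ n) (n ⊕ n) ℝ :=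
  fromBlocks ((2 * κ₁ ^ 3 * κ₂) • D ^ 3 + (2 * κ₁ * κ₂ ^ 2) • D ^ 2) 0 0 ((2 * κ₁ * κ₂) • D)

lemma observerLyapunov_eq {D : Matrix n n ℝ} (hD : Dᵀ = D) (κ₁ κ₂ : ℝ) :
    (fromBlocks (-(κ₁ • D)) 1 (-(κ₂ • D)) 0)ᵀ * observerLyapunovP κ₁ κ₂ D +
      observerLyapunovP κ₁ κ₂ D * fromBlocks (-(κ₁ • D)) 1 (-(κ₂ • D)) 0 =
      -observerLyapunovQ κ₁ κ₂ D := by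
  simp only [observerLyapunovP, observerLyapunovQ, fromBlocks_transpose, transpose_neg,
    transpose_smul, transpose_one, transpose_zero, hD, fromBlocks_multiply, fromBlocks_add,
    fromBlocks_neg]
  congr 1 <;>
  simp only [mul_add, add_mul, smul_mul_assoc, mul_smul_comm, mul_one, one_mul, mul_neg, neg_mul,
    mul_zero, zero_mul, add_zero, smul_smul, ← sq, ← pow_succ, ← pow_succ', Nat.reduceAdd,
    smul_zero, neg_zero] <;>
  module

variable {D : Matrix n n ℝ} {κ₁ κ₂ : ℝ}

lemma observerLyapunovP_posDef (hD : D.PosDef) (h₁ : 0 < κ₁) (h₂ : 0 < κ₂) :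
    (observerLyapunovP κ₁ κ₂ D).PosDef := by
  have hsplit : observerLyapunovP κ₁ κ₂ D =
      fromBlocks ((κ₁ ^ 2 * κ₂) • D ^ 2 + κ₂ ^ 2 • D) 0 0 ((2 * κ₂) • 1 + κ₁ ^ 2 • D) +
      fromBlocks (κ₂ ^ 2 • D) (-(κ₂ * κ₁) • D) (-(κ₂ * κ₁) • D) (κ₁ ^ 2 • D) := by
    rw [observerLyapunovP, fromBlocks_add]
    congr 1 <;> module
  rw [hsplit]
  refine PosDef.add_posSemidef (.fromBlocks_zero ?_ ?_) (posSemidef_fromBlocks_smul hD.posSemidef _ _)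
  · exact ((hD.pow 2).smul (by positivity)).add (hD.smul (by positivity))
  · exact (PosDef.one.smul (by positivity)).add (hD.smul (by positivity))

lemma observerLyapunovQ_posDef (hD : D.PosDef) (h₁ : 0 < κ₁) (h₂ : 0 < κ₂) :
    (observerLyapunovQ κ₁ κ₂ D).PosDef :=
  .fromBlocks_zero (((hD.pow 3).smul (by positivity)).add ((hD.pow 2).smul (by positivity)))
    (hD.smul (by positivity))

end Observer

end Matrix

/-- For symmetric positive definite `D` and `κ₁, κ₂ > 0`, the
block matrix `F = [[-κ₁D, I],[-κ₂D, 0]]` is Hurwitz (all complex eigenvalues have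
negative real part); equivalently there are symmetric positive definite `P, Q̃` with
`FᵀP + PF = -Q̃`. -/
theorem stmt12 {N : ℕ} (D : Matrix (Fin N) (Fin N) ℝ) (hD : D.PosDef)
    (κ₁ κ₂ : ℝ) (h₁ : 0 < κ₁) (h₂ : 0 < κ₂)
    (F : Matrix (Fin N ⊕ Fin N) (Fin N ⊕ Fin N) ℝ)
    (hF : F = Matrix.fromBlocks (-(κ₁ • D)) 1 (-(κ₂ • D)) 0) :
    (∀ z : ℂ, z ∈ spectrum ℂ (F.map (algebraMap ℝ ℂ)) → z.re < 0) ∧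
    ∃ P Qt : Matrix (Fin N ⊕ Fin N) (Fin N ⊕ Fin N) ℝ,
      P.PosDef ∧ Qt.PosDef ∧ Fᵀ * P + P * F = -Qt := by
  have hDsymm : Dᵀ = D := by simpa using hD.isHermitian.eq
  have hlyap : Fᵀ * observerLyapunovP κ₁ κ₂ D + observerLyapunovP κ₁ κ₂ D * F =
      -observerLyapunovQ κ₁ κ₂ D := hF ▸ observerLyapunov_eq hDsymm κ₁ κ₂
  have hP := observerLyapunovP_posDef hD h₁ h₂
  have hQ := observerLyapunovQ_posDef hD h₁ h₂
  exact ⟨fun z hz => re_lt_zero_of_mem_spectrum_map_of_lyapunov hP hQ hlyap hz,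
    _, _, hP, hQ, hlyap⟩
end
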